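/- arXiv:math/0211069 — 2 statements merged into one kernel-verified Lean document; each statement's English description precedes it below -/
import Mathlib

section
/- For every proper metric space X one has asind X ≤ asInd X, where asind is the small inductive asymptotic dimension and asInd is the asymptotic inductive dimension. -/
universe u

/-- A bounded continuous function `φ : X → ℝ` is slowly oscillating if, for all `r, ε > 0`,
its oscillation over `r`-balls is `< ε` off some compact set. -/
def SlowlyOscillating {X : Type*} [MetricSpace X] (φ : X → ℝ) : Prop :=
  Continuous φ ∧ (∃ C : ℝ, ∀ x, |φ x| ≤ C) ∧
  ∀ r : ℝ, 0 < r → ∀ ε : ℝ, 0 < ε → ∃ K : Set X, IsCompact K ∧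
    ∀ x, x ∉ K → ∀ y, dist x y < r → |φ y - φ x| < ε

/-- The ambient space in which the Higson compactification is realized:
the product of one copy of `ℝ` for each slowly oscillating function. -/
def HigsonSpace (X : Type u) [MetricSpace X] : Type u :=
  {φ : X → ℝ // SlowlyOscillating φ} → ℝ

noncomputable instance (X : Type u) [MetricSpace X] : TopologicalSpace (HigsonSpace X) :=
  Pi.topologicalSpace

/-- The canonical evaluation map of `X` into `HigsonSpace X`. -/
def higsonEmb (X : Type u) [MetricSpace X] : X → HigsonSpace X :=
  fun x φ => φ.1 x

/-- The Higson compactification `X̄` of `X`. -/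
def higsonCompactification (X : Type u) [MetricSpace X] : Set (HigsonSpace X) :=
  closure (Set.range (higsonEmb X))

/-- The Higson corona `νX = X̄ ∖ X`. -/
def higsonCorona (X : Type u) [MetricSpace X] : Set (HigsonSpace X) :=
  higsonCompactification X \ Set.range (higsonEmb X)

/-- The trace `A' = cl_{X̄}(A) ∩ νX` of `A ⊆ X` on the Higson corona. -/
def higsonTrace (X : Type u) [MetricSpace X] (A : Set X) : Set (HigsonSpace X) :=
  closure (higsonEmb X '' A) ∩ higsonCorona X

/-- `C` is a separator between `A` and `B` inside the subspace `W`: `C` is closed in `W` and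
`W ∖ C` splits into two disjoint relatively open pieces containing `A` and `B` respectively. -/
def SepIn {H : Type*} [TopologicalSpace H] (W A B C : Set H) : Prop :=
  C ⊆ W ∧ (∃ C' : Set H, IsClosed C' ∧ C = C' ∩ W) ∧
  ∃ U V : Set H, IsOpen U ∧ IsOpen V ∧ Disjoint (U ∩ W) (V ∩ W) ∧
    A ⊆ U ∧ B ⊆ V ∧ W \ C = (U ∩ W) ∪ (V ∩ W)

/-- `A` and `B` are asymptotically disjoint: outside of suitable bounded sets they are
arbitrarily far from each other. -/
def AsympDisjoint {X : Type*} [MetricSpace X] (A B : Set X) : Prop :=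
  ∀ R : ℝ, ∃ K : Set X, Bornology.IsBounded K ∧
    ∀ a ∈ A \ K, ∀ b ∈ B \ K, R ≤ dist a b

/-- `C` is an asymptotic separator between `A` and `B`: its trace separates the traces
of `A` and `B` in the Higson corona. -/
def IsAsympSeparator (X : Type u) [MetricSpace X] (A B C : Set X) : Prop :=
  SepIn (higsonCorona X) (higsonTrace X A) (higsonTrace X B) (higsonTrace X C)

/-- `AsIndLE k X` means `asInd X ≤ k - 1` for the asymptotic inductive dimension:
`asInd X ≤ -1` iff `X` is bounded, and `asInd X ≤ n` iff any two asymptotically disjoint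
subsets admit an asymptotic separator `C` with `asInd C ≤ n - 1`. -/
def AsIndLE : (k : ℕ) → (Y : Type u) → [MetricSpace Y] → Prop
  | 0, Y, _ => Bornology.IsBounded (Set.univ : Set Y)
  | k + 1, Y, _ =>
    ∀ A B : Set Y, AsympDisjoint A B →
      ∃ C : Set Y, IsAsympSeparator Y A B C ∧ AsIndLE k ↥C

/-- `AsindLE k X` means `asind X ≤ k - 1` for the small inductive asymptotic dimension. -/
def AsindLE : (k : ℕ) → (Y : Type u) → [MetricSpace Y] → Prop
  | 0, Y, _ => Bornology.IsBounded (Set.univ : Set Y)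
  | k + 1, Y, _ =>
    ∀ A : Set Y, ∀ p ∈ higsonCorona Y \ higsonTrace Y A,
      ∃ C : Set Y, SepIn (higsonCorona Y) (higsonTrace Y A) {p} (higsonTrace Y C) ∧
        AsindLE k ↥C

/-!
A point `p` of the corona outside `A'` has a basic neighbourhood, given by finitely many slowly
oscillating functions `φ` and radii `ε φ`, that misses `A'`. The points of `X` where every such `φ`
is within `ε φ / 2` of `p φ` form a set `B` with `p ∈ B'`, and on `A` at least one `φ` is
`ε φ`-far from `p φ`. Since the `φ` oscillate by less than `ε φ / 2` on bounded scales far out,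
`A` and `B` are asymptotically disjoint, so an asymptotic separator between `A` and `B` is also
a separator between `A'` and `p`.
-/

open Set Topology Metric

theorem exists_finite_pi_ball_subset {ι : Type*} {E : ι → Type*} [∀ i, PseudoMetricSpace (E i)]
    {p : ∀ i, E i} {N : Set (∀ i, E i)} (hN : N ∈ 𝓝 p) :
    ∃ I : Set ι, I.Finite ∧ ∃ ε : ι → ℝ, (∀ i ∈ I, 0 < ε i) ∧
      I.pi (fun i => ball (p i) (ε i)) ⊆ N := by
  rw [nhds_pi] at hN
  obtain ⟨⟨I, ε⟩, ⟨hI, hε⟩, hsub⟩ :=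
    (Filter.hasBasis_pi fun i => nhds_basis_ball (x := p i)).mem_iff.1 hN
  exact ⟨I, hI, ε, hε, hsub⟩

section AsympDisjoint

variable {X : Type*} [MetricSpace X]

theorem AsympDisjoint.mono_left {A A' B : Set X} (h : AsympDisjoint A B) (hA : A' ⊆ A) :
    AsympDisjoint A' B := fun R =>
  let ⟨K, hK, hfar⟩ := h R
  ⟨K, hK, fun a ha => hfar a ⟨hA ha.1, ha.2⟩⟩

theorem AsympDisjoint.biUnion_left {ι : Type*} {I : Set ι} (hI : I.Finite) {A : ι → Set X}
    {B : Set X} (h : ∀ i ∈ I, AsympDisjoint (A i) B) : AsympDisjoint (⋃ i ∈ I, A i) B := by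
  intro R
  choose! K hK hfar using fun i hi => h i hi R
  refine ⟨⋃ i ∈ I, K i, (Bornology.isBounded_biUnion hI).2 hK, ?_⟩
  rintro a ⟨ha, haK⟩ b ⟨hb, hbK⟩
  obtain ⟨i, hi, hai⟩ := mem_iUnion₂.1 ha
  exact hfar i hi a ⟨hai, fun h => haK (mem_biUnion hi h)⟩ b
    ⟨hb, fun h => hbK (mem_biUnion hi h)⟩

theorem SlowlyOscillating.asympDisjoint {φ : X → ℝ} (hφ : SlowlyOscillating φ) {δ : ℝ}
    (hδ : 0 < δ) {A B : Set X} (hAB : ∀ a ∈ A, ∀ b ∈ B, δ ≤ |φ b - φ a|) :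
    AsympDisjoint A B := by
  intro R
  obtain ⟨K, hK, hosc⟩ := hφ.2.2 (max R 1) (lt_max_of_lt_right one_pos) δ hδ
  refine ⟨K, hK.isBounded, fun a ha b hb => ?_⟩
  by_contra! hR
  exact (hAB a ha.1 b hb.1).not_gt (hosc a ha.2 b (hR.trans_le (le_max_left R 1)))

end AsympDisjoint

theorem SepIn.mono_right {H : Type*} [TopologicalSpace H] {W A B B' C : Set H}
    (h : SepIn W A B C) (hB : B' ⊆ B) : SepIn W A B' C := by
  obtain ⟨hCW, hC, U, V, hU, hV, hUV, hAU, hBV, hWC⟩ := h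
  exact ⟨hCW, hC, U, V, hU, hV, hUV, hAU, hB.trans hBV, hWC⟩

theorem exists_asympDisjoint_mem_higsonTrace {Y : Type u} [MetricSpace Y] {A : Set Y}
    {p : HigsonSpace Y} (hp : p ∈ higsonCorona Y) (hpA : p ∉ higsonTrace Y A) :
    ∃ B : Set Y, AsympDisjoint A B ∧ p ∈ higsonTrace Y B := by
  have hAc : (closure (higsonEmb Y '' A))ᶜ ∈ 𝓝 p :=
    isClosed_closure.isOpen_compl.mem_nhds fun h => hpA ⟨h, hp⟩
  obtain ⟨I, hI, ε, hε, hIA⟩ := exists_finite_pi_ball_subset hAc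
  set U : Set (HigsonSpace Y) := I.pi fun φ => ball (p φ) (ε φ / 2)
  refine ⟨higsonEmb Y ⁻¹' U, ?_, ?_, hp⟩
  · have hAfar : A ⊆ ⋃ φ ∈ I, {a | ε φ ≤ |φ.1 a - p φ|} := by
      intro a ha
      obtain ⟨φ, hφ, hfar⟩ : ∃ φ ∈ I, ε φ ≤ |φ.1 a - p φ| := by
        by_contra! hnear
        exact hIA (fun φ hφ => mem_ball.2 (hnear φ hφ)) (subset_closure (mem_image_of_mem _ ha))
      exact mem_biUnion hφ hfar
    refine (AsympDisjoint.biUnion_left hI fun φ hφ => ?_).mono_left hAfar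
    refine φ.2.asympDisjoint (half_pos (hε φ hφ)) fun a ha b hb => ?_
    have hap : ε φ ≤ |φ.1 a - p φ| := ha
    have hbp : |φ.1 b - p φ| < ε φ / 2 := hb φ hφ
    linarith [abs_sub_le (φ.1 a) (φ.1 b) (p φ), abs_sub_comm (φ.1 a) (φ.1 b)]
  · have hU : IsOpen U := isOpen_set_pi hI fun _ _ => isOpen_ball
    have hpU : p ∈ U := fun φ hφ => mem_ball_self (half_pos (hε φ hφ))
    rw [image_preimage_eq_inter_range]
    exact hU.inter_closure ⟨hpU, hp.1⟩

theorem asind_le_asInd_general (X : Type u) [MetricSpace X] (k : ℕ)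
    (h : AsIndLE k X) : AsindLE k X := by
  induction k generalizing X with
  | zero => exact h
  | succ k ih =>
    intro A p hp
    obtain ⟨B, hAB, hpB⟩ := exists_asympDisjoint_mem_higsonTrace hp.1 hp.2
    obtain ⟨C, hsep, hC⟩ := h A B hAB
    exact ⟨C, hsep.mono_right (singleton_subset_iff.2 hpB), ih C hC⟩

/-- for every proper metric space, `asind X ≤ asInd X`
(`AsIndLE k X` means `asInd X ≤ k - 1`, and similarly for `AsindLE`). -/
theorem asind_le_asInd (X : Type u) [MetricSpace X] [ProperSpace X] (k : ℕ)
    (h : AsIndLE k X) : AsindLE k X :=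
  asind_le_asInd_general X k h
end

section
/- Let X be a proper uniformly arcwise connected metric space, let A and B be asymptotically disjoint subsets of X, and let C be a separator between A and B in X such that C and A ∪ B are asymptotically disjoint. Then C is an asymptotic separator between A and B in X. -/
/-!
Write `Cᶜ = U ∪ V` with `A ⊆ U`, `B ⊆ V` open and disjoint. In the Higson compactification the
closures of `U`, `V` and `C` cover the corona, and the closures of `U` and `V` meet only inside
the closure of `C`: at a point `p` outside it take a slowly oscillating `g` vanishing on `C`
with `p g = 1`; since a short path from `U` to `V` must cross `C`, the function equal to `-g`
on `U`, to `g` on `V` and to `0` on `C` is still slowly oscillating, yet it would take both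
values `-1` and `1` at `p`. Uniform arcwise connectedness also makes `A` asymptotically disjoint
from `V` (and `B` from `U`), and asymptotically disjoint `D`, `E` have disjoint traces, being
separated by `d(x, D) / (d(x, D) + d(x, E) + 1)`. So the complements of `cl V ∪ cl C` and
`cl U ∪ cl C` split the corona minus `C'` into pieces containing `A'` and `B'`.
-/

universe u

/-- `X` is uniformly arcwise connected: nearby points are joined by paths of small diameter. -/
def UnifArcConnected (X : Type*) [MetricSpace X] : Prop :=
  ∀ ε : ℝ, 0 < ε → ∃ δ : ℝ, ∀ x y : X, dist x y < ε →
    ∃ p : Path x y, Metric.diam (Set.range p) ≤ δ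

/-- `C` is a separator between `A` and `B` in the whole space. -/
def IsSeparator {Z : Type*} [TopologicalSpace Z] (A B C : Set Z) : Prop :=
  IsClosed C ∧ ∃ U V : Set Z, IsOpen U ∧ IsOpen V ∧ Disjoint U V ∧
    A ⊆ U ∧ B ⊆ V ∧ Cᶜ = U ∪ V

open Set Filter Metric

theorem abs_div_add_add_one_sub_le {a b a' b' d : ℝ} (ha : 0 ≤ a) (hb : 0 ≤ b) (ha' : 0 ≤ a')
    (hb' : 0 ≤ b') (hda : |a' - a| ≤ d) (hdb : |b' - b| ≤ d) :
    |a' / (a' + b' + 1) - a / (a + b + 1)| ≤ d / (a + b + 1) := by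
  have hs : 0 < a + b + 1 := by positivity
  have hs' : 0 < a' + b' + 1 := by positivity
  rw [div_sub_div _ _ hs'.ne' hs.ne', abs_div, abs_of_pos (mul_pos hs' hs),
    div_le_div_iff₀ (mul_pos hs' hs) hs]
  -- `a' (b + 1) - a (b' + 1) = a' (b - b') + (a' - a) (b' + 1)`
  have key : |a' * (a + b + 1) - (a' + b' + 1) * a| ≤ d * (a' + b' + 1) := by
    rw [abs_le] at hda hdb ⊢
    constructor <;> nlinarith
  calc |a' * (a + b + 1) - (a' + b' + 1) * a| * (a + b + 1)
      ≤ d * (a' + b' + 1) * (a + b + 1) := by gcongr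
    _ = d * ((a' + b' + 1) * (a + b + 1)) := by ring

section SlowlyOscillating

variable {X : Type*} [MetricSpace X] {φ : X → ℝ}

theorem slowlyOscillating_iff : SlowlyOscillating φ ↔ Continuous φ ∧ (∃ C : ℝ, ∀ x, |φ x| ≤ C) ∧
    ∀ r : ℝ, 0 < r → ∀ ε : ℝ, 0 < ε →
      ∀ᶠ x in cocompact X, ∀ y, dist x y < r → |φ y - φ x| < ε := by
  simp only [SlowlyOscillating, hasBasis_cocompact.eventually_iff, mem_compl_iff]

theorem SlowlyOscillating.eventually (hφ : SlowlyOscillating φ) {r ε : ℝ} (hr : 0 < r)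
    (hε : 0 < ε) : ∀ᶠ x in cocompact X, ∀ y, dist x y < r → |φ y - φ x| < ε :=
  (slowlyOscillating_iff.1 hφ).2.2 r hr ε hε

theorem SlowlyOscillating.of_abs_sub_le_sum {ι : Type*} (s : Finset ι) {ψ : ι → X → ℝ}
    (hψ : ∀ i ∈ s, SlowlyOscillating (ψ i)) (L : ι → ℝ) (hL : ∀ i ∈ s, 0 ≤ L i)
    (hc : Continuous φ) (hb : ∃ C : ℝ, ∀ x, |φ x| ≤ C)
    (h : ∀ x y, |φ y - φ x| ≤ ∑ i ∈ s, L i * |ψ i y - ψ i x|) : SlowlyOscillating φ := by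
  refine slowlyOscillating_iff.2 ⟨hc, hb, fun r hr ε hε => ?_⟩
  have hL₀ : 0 ≤ ∑ i ∈ s, L i := Finset.sum_nonneg hL
  set η := ε / (∑ i ∈ s, L i + 1)
  have hη : 0 < η := by positivity
  filter_upwards [(eventually_all_finset s).2 fun i hi => (hψ i hi).eventually hr hη]
    with x hx y hxy
  calc |φ y - φ x| ≤ ∑ i ∈ s, L i * |ψ i y - ψ i x| := h x y
    _ ≤ ∑ i ∈ s, L i * η := Finset.sum_le_sum fun i hi =>
        mul_le_mul_of_nonneg_left (hx i hi y hxy).le (hL i hi)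
    _ = ε * ((∑ i ∈ s, L i) / (∑ i ∈ s, L i + 1)) := by
        rw [← Finset.sum_mul]; ring
    _ < ε * 1 := by gcongr; rw [div_lt_one (by positivity)]; linarith
    _ = ε := mul_one ε

end SlowlyOscillating

section HigsonSpace

variable {X : Type*} [MetricSpace X]

instance : T2Space (HigsonSpace X) :=
  inferInstanceAs (T2Space ({φ : X → ℝ // SlowlyOscillating φ} → ℝ))

theorem continuous_higsonEmb : Continuous (higsonEmb X) :=
  continuous_pi fun φ => φ.2.1

theorem continuous_higsonSpace_apply (ψ : {φ : X → ℝ // SlowlyOscillating φ}) :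
    Continuous fun z : HigsonSpace X => z ψ :=
  continuous_apply ψ

theorem apply_mem_of_mem_closure_higsonEmb_image {ψ : {φ : X → ℝ // SlowlyOscillating φ}}
    {T : Set X} {S : Set ℝ} (hS : IsClosed S) (hψ : MapsTo ψ.1 T S) {p : HigsonSpace X}
    (hp : p ∈ closure (higsonEmb X '' T)) : p ψ ∈ S :=
  closure_minimal (by rintro _ ⟨x, hx, rfl⟩; exact hψ hx)
    (hS.preimage (continuous_higsonSpace_apply ψ)) hp

theorem mem_closure_higsonEmb_image_diff {D K : Set X} (hK : IsCompact K) {p : HigsonSpace X}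
    (hp : p ∈ closure (higsonEmb X '' D)) (hpν : p ∈ higsonCorona X) :
    p ∈ closure (higsonEmb X '' (D \ K)) := by
  have hD : higsonEmb X '' D ⊆ higsonEmb X '' (D \ K) ∪ higsonEmb X '' K := by
    rw [← image_union, sdiff_union_self]
    exact image_mono subset_union_left
  have hKc : IsClosed (higsonEmb X '' K) := (hK.image continuous_higsonEmb).isClosed
  have hp' := closure_mono hD hp
  rw [closure_union, hKc.closure_eq] at hp'
  rcases hp' with hp' | ⟨x, -, rfl⟩
  · exact hp'
  · exact absurd (mem_range_self x) hpν.2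

end HigsonSpace

namespace AsympDisjoint

variable {X : Type*} [MetricSpace X] {D E : Set X}

theorem symm (h : AsympDisjoint D E) : AsympDisjoint E D := fun R =>
  let ⟨K, hK, hR⟩ := h R
  ⟨K, hK, fun b hb a ha => dist_comm a b ▸ hR a ha b hb⟩

theorem mono_right {E' : Set X} (h : AsympDisjoint D E) (hE : E' ⊆ E) : AsympDisjoint D E' :=
  fun R =>
  let ⟨K, hK, hR⟩ := h R
  ⟨K, hK, fun a ha b hb => hR a ha b ⟨hE hb.1, hb.2⟩⟩

theorem tendsto_infDist_add_infDist (h : AsympDisjoint D E) (hD : D.Nonempty)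
    (hE : E.Nonempty) :
    Tendsto (fun x => infDist x D + infDist x E) (Bornology.cobounded X) atTop := by
  refine tendsto_atTop.2 fun R => ?_
  obtain ⟨K, hK, hR⟩ := h R
  have hfar : ∀ x ∉ cthickening R K, ∀ a ∈ D, ∀ b ∈ E, R ≤ dist x a + dist x b := by
    intro x hx a ha b hb
    have hxK : ∀ c ∈ K, R ≤ dist x c := fun c hc =>
      not_lt.1 fun hlt => hx (mem_cthickening_of_dist_le x c R K hc hlt.le)
    by_cases haK : a ∈ K
    · linarith [hxK a haK, dist_nonneg (x := x) (y := b)]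
    by_cases hbK : b ∈ K
    · linarith [hxK b hbK, dist_nonneg (x := x) (y := a)]
    linarith [hR a ⟨ha, haK⟩ b ⟨hb, hbK⟩, dist_triangle_left a b x]
  filter_upwards [Bornology.isBounded_def.1 hK.cthickening] with x hx
  have : ∀ a ∈ D, R - infDist x E ≤ dist x a := fun a ha => by
    linarith [(le_infDist hE).2 fun b hb => sub_le_iff_le_add'.2 (hfar x hx a ha b hb)]
  linarith [(le_infDist hD).2 this]

variable [ProperSpace X]

theorem exists_slowlyOscillating (h : AsympDisjoint D E) (hD : D.Nonempty) (hE : E.Nonempty) :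
    ∃ φ : {φ : X → ℝ // SlowlyOscillating φ},
      (∀ x ∈ D, φ.1 x = 0) ∧ ∀ᶠ x in cocompact X, x ∈ E → 1 / 2 ≤ φ.1 x := by
  set s : X → ℝ := fun x => infDist x D + infDist x E + 1
  have hs : ∀ x, 0 < s x := fun x =>
    add_pos_of_nonneg_of_pos (add_nonneg infDist_nonneg infDist_nonneg) one_pos
  have hs_tendsto : Tendsto s (cocompact X) atTop := by
    rw [← cobounded_eq_cocompact]
    exact tendsto_atTop_add_const_right _ 1 (h.tendsto_infDist_add_infDist hD hE)
  have hosc : ∀ x y, |infDist y D / s y - infDist x D / s x| ≤ dist x y / s x := fun x y => by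
    have hLip : ∀ F : Set X, |infDist y F - infDist x F| ≤ dist x y := fun F => by
      simpa [Real.dist_eq, dist_comm y x] using (lipschitz_infDist_pt F).dist_le_mul y x
    exact abs_div_add_add_one_sub_le infDist_nonneg infDist_nonneg infDist_nonneg
      infDist_nonneg (hLip D) (hLip E)
  refine ⟨⟨fun x => infDist x D / s x, slowlyOscillating_iff.2 ⟨?_, ⟨1, fun x => ?_⟩, ?_⟩⟩,
    fun x hx => by simp [infDist_zero_of_mem hx], ?_⟩
  · exact (continuous_infDist_pt D).div (by fun_prop) fun x => (hs x).ne'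
  · rw [abs_of_nonneg (div_nonneg infDist_nonneg (hs x).le), div_le_one (hs x)]
    linarith [infDist_nonneg (x := x) (s := E)]
  · intro r hr ε hε
    filter_upwards [hs_tendsto.eventually_gt_atTop (r / ε)] with x hx y hxy
    calc |infDist y D / s y - infDist x D / s x| ≤ dist x y / s x := hosc x y
      _ < r / (r / ε) := by gcongr
      _ = ε := by field_simp
  · filter_upwards [hs_tendsto.eventually_ge_atTop 2] with x hx hxE
    simp only [s, infDist_zero_of_mem hxE] at hx ⊢
    rw [le_div_iff₀ (by positivity)]
    linarith

theorem disjoint_higsonTrace_closure (h : AsympDisjoint D E) :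
    Disjoint (higsonTrace X D) (closure (higsonEmb X '' E)) := by
  rcases D.eq_empty_or_nonempty with rfl | hD
  · simp [higsonTrace]
  rcases E.eq_empty_or_nonempty with rfl | hE
  · simp
  obtain ⟨φ, hφD, hφE⟩ := h.exists_slowlyOscillating hD hE
  obtain ⟨K, hK, hKE⟩ := (hasBasis_cocompact.eventually_iff).1 hφE
  refine disjoint_left.2 fun p ⟨hpD, hpν⟩ hpE => ?_
  have h0 : p φ ∈ ({0} : Set ℝ) :=
    apply_mem_of_mem_closure_higsonEmb_image isClosed_singleton hφD hpD
  have h1 : p φ ∈ Ici (1 / 2 : ℝ) :=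
    apply_mem_of_mem_closure_higsonEmb_image isClosed_Ici (fun x hx => hKE hx.2 hx.1)
      (mem_closure_higsonEmb_image_diff hK hpE hpν)
  norm_num [mem_singleton_iff.1 h0] at h1

end AsympDisjoint

section Separator

variable {X : Type*} [MetricSpace X] {U V C : Set X}

theorem frontier_subset_of_compl_eq_union {Z : Type*} [TopologicalSpace Z] {U V C : Set Z}
    (hUo : IsOpen U) (hVo : IsOpen V) (hUV : Disjoint U V) (hCc : Cᶜ = U ∪ V) :
    frontier U ⊆ C := by
  rw [hUo.frontier_eq]
  rintro x ⟨hxU, hxU'⟩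
  by_contra hxC
  have hx : x ∈ U ∪ V := hCc ▸ hxC
  exact hx.elim hxU' fun hxV => disjoint_left.1 (hUV.closure_left hVo) hxU hxV

theorem UnifArcConnected.exists_near_mem_of_separates (huac : UnifArcConnected X)
    (hUo : IsOpen U) (hVo : IsOpen V) (hUV : Disjoint U V) (hCc : Cᶜ = U ∪ V) (r : ℝ) :
    ∃ δ : ℝ, ∀ x ∈ U, ∀ y ∈ V, dist x y < r → ∃ c ∈ C, dist x c ≤ δ ∧ dist y c ≤ δ := by
  rcases le_or_gt r 0 with hr | hr
  · exact ⟨0, fun x _ y _ hxy => absurd hxy (not_lt.2 (hr.trans dist_nonneg))⟩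
  obtain ⟨δ, hδ⟩ := huac r hr
  refine ⟨δ, fun x hx y hy hxy => ?_⟩
  obtain ⟨γ, hγ⟩ := hδ x y hxy
  have hbdd := (isCompact_range γ.continuous).isBounded
  have hx' : x ∈ range γ := ⟨0, γ.source⟩
  have hy' : y ∈ range γ := ⟨1, γ.target⟩
  -- the connected range of `γ` meets both `U` and `V`
  obtain ⟨c, hcγ, hcC⟩ : ∃ c ∈ range γ, c ∈ C := by
    by_contra! hγC
    have hsub := (isPreconnected_range γ.continuous).subset_left_of_subset_union hUo hVo hUV
      (fun z hz => hCc ▸ hγC z hz) ⟨x, hx', hx⟩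
    exact disjoint_left.1 hUV (hsub hy') hy
  exact ⟨c, hcC, (dist_le_diam_of_mem hbdd hx' hcγ).trans hγ,
    (dist_le_diam_of_mem hbdd hy' hcγ).trans hγ⟩

theorem AsympDisjoint.of_separates (huac : UnifArcConnected X) (hUo : IsOpen U)
    (hVo : IsOpen V) (hUV : Disjoint U V) (hCc : Cᶜ = U ∪ V) {A : Set X} (hAU : A ⊆ U)
    (hAC : AsympDisjoint A C) : AsympDisjoint A V := by
  intro R
  obtain ⟨δ, hδ⟩ := huac.exists_near_mem_of_separates hUo hVo hUV hCc R
  obtain ⟨K, hK, hKAC⟩ := hAC (δ + 1)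
  refine ⟨cthickening δ K, hK.cthickening, fun a ⟨ha, haK⟩ v ⟨hv, _⟩ => not_lt.1 fun hav => ?_⟩
  obtain ⟨c, hcC, hac, -⟩ := hδ a (hAU ha) v hv hav
  have hcK : c ∉ K := fun hcK => haK (mem_cthickening_of_dist_le a c δ K hcK hac)
  have haK' : a ∉ K := fun haK' => haK (self_subset_cthickening K haK')
  linarith [hKAC a ⟨ha, haK'⟩ c ⟨hcC, hcK⟩]

end Separator

section Signed

variable {X : Type*} {U V C : Set X} {g : X → ℝ}

theorem abs_indicator_sub_indicator_le (hUV : Disjoint U V) (x : X) :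
    |(V.indicator g - U.indicator g) x| ≤ |g x| := by
  by_cases hxU : x ∈ U
  · simp [hxU, disjoint_left.1 hUV hxU]
  · by_cases hxV : x ∈ V <;> simp [hxU, hxV]

theorem abs_indicator_sub_indicator_sub_le (hUV : Disjoint U V) (hCc : Cᶜ = U ∪ V)
    (hgC : ∀ c ∈ C, g c = 0) {x y : X} (hUV' : ¬(x ∈ U ∧ y ∈ V)) (hVU' : ¬(x ∈ V ∧ y ∈ U)) :
    |(V.indicator g - U.indicator g) y - (V.indicator g - U.indicator g) x| ≤ |g y - g x| := by
  have hside : ∀ z, z ∈ U ∧ z ∉ V ∨ z ∈ V ∧ z ∉ U ∨ z ∉ U ∧ z ∉ V ∧ g z = 0 := fun z => by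
    by_cases hzU : z ∈ U
    · exact Or.inl ⟨hzU, disjoint_left.1 hUV hzU⟩
    by_cases hzV : z ∈ V
    · exact Or.inr (Or.inl ⟨hzV, hzU⟩)
    refine Or.inr (Or.inr ⟨hzU, hzV, hgC z ?_⟩)
    by_contra hzC
    exact (hCc ▸ hzC : z ∈ U ∪ V).elim hzU hzV
  rcases hside x with ⟨hx, hx'⟩ | ⟨hx, hx'⟩ | ⟨hx, hx', hgx⟩ <;>
  rcases hside y with ⟨hy, hy'⟩ | ⟨hy, hy'⟩ | ⟨hy, hy', hgy⟩ <;>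
  simp_all [abs_sub_comm, neg_add_eq_sub]

end Signed

section Crossing

variable {X : Type*} [MetricSpace X] {U V C : Set X}

theorem UnifArcConnected.slowlyOscillating_indicator_sub_indicator (huac : UnifArcConnected X)
    (hUo : IsOpen U) (hVo : IsOpen V) (hUV : Disjoint U V) (hCc : Cᶜ = U ∪ V) {g : X → ℝ}
    (hg : SlowlyOscillating g) (hgC : ∀ c ∈ C, g c = 0) :
    SlowlyOscillating (V.indicator g - U.indicator g) := by
  have hCc' : Cᶜ = V ∪ U := hCc.trans (union_comm U V)
  obtain ⟨hgc, ⟨M, hM⟩, -⟩ := slowlyOscillating_iff.1 hg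
  refine slowlyOscillating_iff.2 ⟨?_, ⟨M, fun x => (abs_indicator_sub_indicator_le hUV x).trans
    (hM x)⟩, fun r hr ε hε => ?_⟩
  · exact (continuous_indicator (fun x hx => hgC x (frontier_subset_of_compl_eq_union
      hVo hUo hUV.symm hCc' hx)) hgc.continuousOn).sub
      (continuous_indicator (fun x hx => hgC x (frontier_subset_of_compl_eq_union
        hUo hVo hUV hCc hx)) hgc.continuousOn)
  obtain ⟨δ, hδ⟩ := huac.exists_near_mem_of_separates hUo hVo hUV hCc r
  filter_upwards [hg.eventually (r := r + |δ| + 1) (by positivity) (ε := ε / 3) (by positivity)]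
    with x hx y hxy
  have hgxy : |g y - g x| < ε / 3 := hx y (by linarith [abs_nonneg δ])
  by_cases hopp : x ∈ U ∧ y ∈ V ∨ x ∈ V ∧ y ∈ U
  · -- a point of `C` near `x`, where `g` vanishes, makes `g` small at `x` and at `y`
    obtain ⟨c, hcC, hxc⟩ : ∃ c ∈ C, dist x c ≤ δ := by
      rcases hopp with ⟨hxU, hyV⟩ | ⟨hxV, hyU⟩
      · obtain ⟨c, hcC, hxc, -⟩ := hδ x hxU y hyV hxy
        exact ⟨c, hcC, hxc⟩
      · obtain ⟨c, hcC, -, hxc⟩ := hδ y hyU x hxV (dist_comm x y ▸ hxy)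
        exact ⟨c, hcC, hxc⟩
    have hgx : |g c - g x| < ε / 3 := hx c (by linarith [le_abs_self δ])
    rw [hgC c hcC, zero_sub, abs_neg] at hgx
    calc _ ≤ |(V.indicator g - U.indicator g) y| + |(V.indicator g - U.indicator g) x| :=
          abs_sub _ _
      _ ≤ |g y| + |g x| := add_le_add (abs_indicator_sub_indicator_le hUV y)
          (abs_indicator_sub_indicator_le hUV x)
      _ ≤ |g y - g x| + |g x| + |g x| := by linarith [abs_sub_abs_le_abs_sub (g y) (g x)]
      _ < ε := by linarith
  · rw [not_or] at hopp
    calc _ ≤ |g y - g x| := abs_indicator_sub_indicator_sub_le hUV hCc hgC hopp.1 hopp.2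
      _ < ε := by linarith

end Crossing

section Separation

variable {X : Type*} [MetricSpace X]

theorem exists_slowlyOscillating_eq_zero_of_notMem_closure {C : Set X} {p : HigsonSpace X}
    (hp : p ∈ higsonCompactification X) (hpC : p ∉ closure (higsonEmb X '' C)) :
    ∃ g : {φ : X → ℝ // SlowlyOscillating φ}, (∀ c ∈ C, g.1 c = 0) ∧ p g = 1 := by
  obtain ⟨I, u, hu, hIC⟩ := isOpen_pi_iff.1 isClosed_closure.isOpen_compl p hpC
  have hball : ∀ j ∈ I, ∃ e > 0, ball (p j) e ⊆ u j := fun j hj =>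
    Metric.isOpen_iff.1 (hu j hj).1 _ (hu j hj).2
  choose! e he heu using hball
  set S : HigsonSpace X → ℝ := fun z => ∑ j ∈ I, |z j - p j| / e j
  set G : HigsonSpace X → ℝ := fun z => max (1 - S z) 0
  have hS : Continuous S :=
    continuous_finsetSum I fun j _ => ((continuous_apply j).sub continuous_const).abs.div_const _
  have hG : Continuous G := (continuous_const.sub hS).max continuous_const
  -- `S z < 1` forces every coordinate `z j` into `u j`, hence `z` away from `closure (emb '' C)`
  have hGC : ∀ c ∈ C, G (higsonEmb X c) = 0 := by
    intro c hc
    refine max_eq_right (sub_nonpos.2 (not_lt.1 fun hS1 => ?_))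
    refine hIC (fun j hj => heu j hj ?_) (subset_closure (mem_image_of_mem _ hc))
    have hterm : |higsonEmb X c j - p j| / e j ≤ S (higsonEmb X c) :=
      Finset.single_le_sum (f := fun j => |higsonEmb X c j - p j| / e j)
        (fun i hi => div_nonneg (abs_nonneg _) (he i hi).le) hj
    rw [mem_ball, Real.dist_eq, ← div_lt_one (he j hj)]
    linarith
  have hGosc : ∀ x y, |G (higsonEmb X y) - G (higsonEmb X x)| ≤
      ∑ j ∈ I, (e j)⁻¹ * |j.1 y - j.1 x| := fun x y =>
    calc |G (higsonEmb X y) - G (higsonEmb X x)|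
        ≤ |(1 - S (higsonEmb X y)) - (1 - S (higsonEmb X x))| := abs_max_sub_max_le_abs _ _ _
      _ = |∑ j ∈ I, (|j.1 x - p j| - |j.1 y - p j|) / e j| := by
          simp only [S, higsonEmb, sub_sub_sub_cancel_left, ← Finset.sum_sub_distrib, sub_div]
      _ ≤ ∑ j ∈ I, |(|j.1 x - p j| - |j.1 y - p j|) / e j| := Finset.abs_sum_le_sum_abs _ _
      _ ≤ ∑ j ∈ I, (e j)⁻¹ * |j.1 y - j.1 x| := Finset.sum_le_sum fun j hj => by
          rw [abs_div, abs_of_pos (he j hj), div_eq_inv_mul]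
          refine mul_le_mul_of_nonneg_left ?_ (inv_pos.2 (he j hj)).le
          simpa [abs_sub_comm (j.1 y)] using
            abs_abs_sub_abs_le_abs_sub (j.1 x - p j) (j.1 y - p j)
  have hS0 : ∀ z, 0 ≤ S z := fun z =>
    Finset.sum_nonneg fun j hj => div_nonneg (abs_nonneg _) (he j hj).le
  have hg : SlowlyOscillating (G ∘ higsonEmb X) :=
    .of_abs_sub_le_sum I (fun j _ => j.2) (fun j => (e j)⁻¹)
      (fun j hj => (inv_pos.2 (he j hj)).le) (hG.comp continuous_higsonEmb)
      ⟨1, fun x => abs_le.2 ⟨neg_one_lt_zero.le.trans (le_max_right _ _),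
        max_le (sub_le_self _ (hS0 _)) zero_le_one⟩⟩ hGosc
  refine ⟨⟨G ∘ higsonEmb X, hg⟩, hGC, ?_⟩
  have hpG : p ⟨G ∘ higsonEmb X, hg⟩ = G p := by
    refine Set.EqOn.closure (f := fun z : HigsonSpace X => z ⟨G ∘ higsonEmb X, hg⟩) ?_
      (continuous_higsonSpace_apply _) hG hp
    rintro _ ⟨x, rfl⟩
    rfl
  simp [hpG, G, S]

end Separation

theorem UnifArcConnected.closure_inter_closure_subset {X : Type*} [MetricSpace X]
    (huac : UnifArcConnected X) {U V C : Set X} (hUo : IsOpen U) (hVo : IsOpen V)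
    (hUV : Disjoint U V) (hCc : Cᶜ = U ∪ V) :
    closure (higsonEmb X '' U) ∩ closure (higsonEmb X '' V) ⊆ closure (higsonEmb X '' C) := by
  rintro p ⟨hpU, hpV⟩
  by_contra hpC
  obtain ⟨⟨g, hg⟩, hgC, hpg⟩ := exists_slowlyOscillating_eq_zero_of_notMem_closure
    (closure_mono (image_subset_range _ _) hpU) hpC
  set h : {φ : X → ℝ // SlowlyOscillating φ} :=
    ⟨V.indicator g - U.indicator g,
      huac.slowlyOscillating_indicator_sub_indicator hUo hVo hUV hCc hg hgC⟩
  have hside : ∀ (W : Set X) (σ : ℝ), (∀ x ∈ W, h.1 x = σ * g x) →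
      closure (higsonEmb X '' W) ⊆ {z : HigsonSpace X | z h = σ * z ⟨g, hg⟩} := by
    intro W σ hW
    refine closure_minimal ?_ (isClosed_eq (continuous_higsonSpace_apply h)
      (continuous_const.mul (continuous_higsonSpace_apply _)))
    rintro _ ⟨x, hx, rfl⟩
    exact hW x hx
  have hU := hside U (-1) fun x hx => by simp [h, hx, disjoint_left.1 hUV hx]
  have hV := hside V 1 fun x hx => by simp [h, hx, disjoint_right.1 hUV hx]
  have := (hU hpU).symm.trans (hV hpV)
  norm_num [hpg] at this

theorem sepIn_of_isClosed_cover {H : Type*} [TopologicalSpace H] {W A B F G K : Set H}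
    (hF : IsClosed F) (hG : IsClosed G) (hK : IsClosed K) (hW : W ⊆ F ∪ G ∪ K)
    (hFG : F ∩ G ⊆ K) (hA : Disjoint A (G ∪ K)) (hB : Disjoint B (F ∪ K)) :
    SepIn W A B (K ∩ W) := by
  refine ⟨inter_subset_right, ⟨K, hK, rfl⟩, (G ∪ K)ᶜ, (F ∪ K)ᶜ, (hG.union hK).isOpen_compl,
    (hF.union hK).isOpen_compl, ?_, hA.subset_compl_right, hB.subset_compl_right, ?_⟩
  · refine disjoint_left.2 fun z ⟨hzGK, hzW⟩ ⟨hzFK, _⟩ => ?_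
    rcases hW hzW with (hzF | hzG) | hzK
    · exact hzFK (Or.inl hzF)
    · exact hzGK (Or.inl hzG)
    · exact hzGK (Or.inr hzK)
  · ext z
    constructor
    · rintro ⟨hzW, hzKW⟩
      have hzK : z ∉ K := fun hzK => hzKW ⟨hzK, hzW⟩
      rcases hW hzW with (hzF | hzG) | hzK'
      · exact Or.inl ⟨fun hz => hz.elim (fun hzG => hzK (hFG ⟨hzF, hzG⟩)) hzK, hzW⟩
      · exact Or.inr ⟨fun hz => hz.elim (fun hzF => hzK (hFG ⟨hzF, hzG⟩)) hzK, hzW⟩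
      · exact absurd hzK' hzK
    · rintro (⟨hz, hzW⟩ | ⟨hz, hzW⟩) <;> exact ⟨hzW, fun hzK => hz (Or.inr hzK.1)⟩

theorem separator_is_asymptotic_separator_general (X : Type u) [MetricSpace X] [ProperSpace X]
    (huac : UnifArcConnected X) (A B C : Set X)
    (hsep : IsSeparator A B C)
    (hC : AsympDisjoint C (A ∪ B)) :
    IsAsympSeparator X A B C := by
  obtain ⟨-, U, V, hUo, hVo, hUV, hAU, hBV, hCc⟩ := hsep
  have hAC : AsympDisjoint A C := (hC.mono_right subset_union_left).symm
  have hBC : AsympDisjoint B C := (hC.mono_right subset_union_right).symm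
  have hAV := hAC.of_separates huac hUo hVo hUV hCc hAU
  have hBU := hBC.of_separates huac hVo hUo hUV.symm (hCc.trans (union_comm U V)) hBV
  have hcover : higsonCorona X ⊆ closure (higsonEmb X '' U) ∪ closure (higsonEmb X '' V) ∪
      closure (higsonEmb X '' C) := fun z hz => by
    have hz := hz.1
    rwa [higsonCompactification, ← image_univ, ← compl_union_self C, hCc, image_union,
      image_union, closure_union, closure_union] at hz
  exact sepIn_of_isClosed_cover isClosed_closure isClosed_closure isClosed_closure hcover
    (huac.closure_inter_closure_subset hUo hVo hUV hCc)
    (disjoint_union_right.2 ⟨hAV.disjoint_higsonTrace_closure, hAC.disjoint_higsonTrace_closure⟩)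
    (disjoint_union_right.2 ⟨hBU.disjoint_higsonTrace_closure, hBC.disjoint_higsonTrace_closure⟩)

/-- Proposition `p:sep`: in a proper uniformly arcwise connected space, a
separator `C` between asymptotically disjoint sets `A` and `B` which is asymptotically
disjoint from `A ∪ B` is an asymptotic separator between `A` and `B`. -/
theorem separator_is_asymptotic_separator (X : Type u) [MetricSpace X] [ProperSpace X]
    (huac : UnifArcConnected X) (A B C : Set X)
    (hAB : AsympDisjoint A B) (hsep : IsSeparator A B C)
    (hC : AsympDisjoint C (A ∪ B)) :
    IsAsympSeparator X A B C :=
  separator_is_asymptotic_separator_general X huac A B C hsep hC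
end
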